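/- Let B ≥ 0 be a real number and define φ : ℝ³ → ℝ by φ(v) = exp(−‖v‖ − B(v₁² + v₂²)/4), where v = (v₁, v₂, v₃) and ‖v‖ = √(v₁² + v₂² + v₃²). Then φ is smooth on ℝ³ ∖ {0}, the angular derivative vanishes, i.e. −v₂ ∂₁φ(v) + v₁ ∂₂φ(v) = 0 for all v ≠ 0, and for every v ≠ 0, writing ρ² = v₁² + v₂², one has the identity −(1/2)Δφ(v) + (B² ρ²/8) φ(v) − φ(v)/‖v‖ = (−1/2 + B/2 − B ρ²/(2‖v‖)) φ(v). Consequently the factor on the right-hand side satisfies −1/2 + B/2 − B ρ²/(2‖v‖) ≤ −1/2 + B/2 for all v ≠ 0. -/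

import Mathlib

/-- The Euclidean Laplacian on `ℝ³`: the sum of the three second partial derivatives. -/
noncomputable def laplacian (f : EuclideanSpace ℝ (Fin 3) → ℝ)
    (x : EuclideanSpace ℝ (Fin 3)) : ℝ :=
  ∑ i : Fin 3, iteratedFDeriv ℝ 2 f x
    ![EuclideanSpace.single i (1 : ℝ), EuclideanSpace.single i (1 : ℝ)]

/-- The partial derivative of `f` with respect to the `j`-th coordinate. -/
noncomputable def partialDeriv (j : Fin 3) (f : EuclideanSpace ℝ (Fin 3) → ℝ)
    (x : EuclideanSpace ℝ (Fin 3)) : ℝ :=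
  fderiv ℝ f x (EuclideanSpace.single j (1 : ℝ))

local notation "E3" => EuclideanSpace ℝ (Fin 3)

private lemma hasFDerivAt_norm3 {v : E3} (hv : v ≠ 0) :
    HasFDerivAt (fun w : E3 => ‖w‖) (‖v‖⁻¹ • innerSL ℝ v) v := by
  have h1 : HasFDerivAt (fun w : E3 => ‖w‖ ^ 2) (2 • innerSL ℝ v) v := by
    simpa using (hasFDerivAt_id (𝕜 := ℝ) v).norm_sq
  have hne : ‖v‖ ^ 2 ≠ 0 := pow_ne_zero _ (norm_ne_zero_iff.2 hv)
  have h2 := (Real.hasDerivAt_sqrt hne).comp_hasFDerivAt v h1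
  have heq : Real.sqrt ∘ (fun w : E3 => ‖w‖ ^ 2) = fun w : E3 => ‖w‖ := by
    funext w; exact Real.sqrt_sq (norm_nonneg w)
  rw [heq] at h2
  refine h2.congr_fderiv ?_
  rw [Real.sqrt_sq (norm_nonneg v)]
  ext w
  have : ‖v‖ ≠ 0 := norm_ne_zero_iff.2 hv
  simp [smul_smul]
  field_simp


private lemma hasFDerivAt_sq_proj (j : Fin 3) (v : E3) :
    HasFDerivAt (fun w : E3 => (w j : ℝ) ^ 2)
      ((2 * v j) • (EuclideanSpace.proj (𝕜 := ℝ) j : E3 →L[ℝ] ℝ)) v := by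
  have h := ((EuclideanSpace.proj (𝕜 := ℝ) j).hasFDerivAt (x := v)).mul
    ((EuclideanSpace.proj (𝕜 := ℝ) j).hasFDerivAt (x := v))
  have : (fun w : E3 => (w j : ℝ) ^ 2) = fun w : E3 => (EuclideanSpace.proj (𝕜 := ℝ) j) w * (EuclideanSpace.proj (𝕜 := ℝ) j) w := by
    funext w; simp [pow_two]
  rw [this, show ((2 * v j) • (EuclideanSpace.proj (𝕜 := ℝ) j : E3 →L[ℝ] ℝ))
      = (EuclideanSpace.proj (𝕜 := ℝ) j) v • (EuclideanSpace.proj (𝕜 := ℝ) j : E3 →L[ℝ] ℝ)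
        + (EuclideanSpace.proj (𝕜 := ℝ) j) v • (EuclideanSpace.proj (𝕜 := ℝ) j : E3 →L[ℝ] ℝ) by
    ext w; simp; ring]
  exact h

private lemma hasFDerivAt_phi (B : ℝ) {v : E3} (hv : v ≠ 0) :
    HasFDerivAt (fun w : E3 => Real.exp (-‖w‖ - B * ((w 0) ^ 2 + (w 1) ^ 2) / 4))
      (Real.exp (-‖v‖ - B * ((v 0) ^ 2 + (v 1) ^ 2) / 4) •
        (-(‖v‖⁻¹ • innerSL ℝ v) -
          (B / 4) • ((2 * v 0) • (EuclideanSpace.proj (𝕜 := ℝ) (0 : Fin 3) : E3 →L[ℝ] ℝ)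
            + (2 * v 1) • (EuclideanSpace.proj (𝕜 := ℝ) (1 : Fin 3) : E3 →L[ℝ] ℝ)))) v := by
  have hn := hasFDerivAt_norm3 hv
  have hg := hn.neg.sub (((hasFDerivAt_sq_proj 0 v).add (hasFDerivAt_sq_proj 1 v)).const_mul (B / 4))
  have hfun : (fun w : E3 => -‖w‖ - B / 4 * ((w 0) ^ 2 + (w 1) ^ 2))
      = fun w : E3 => -‖w‖ - B * ((w 0) ^ 2 + (w 1) ^ 2) / 4 := by
    funext w; ring
  replace hg : HasFDerivAt (fun w : E3 => -‖w‖ - B / 4 * ((w 0) ^ 2 + (w 1) ^ 2)) _ v := hg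
  rw [hfun] at hg
  exact hg.exp

private lemma fst_deriv (B : ℝ) (j : Fin 3) {v : E3} (hv : v ≠ 0) :
    fderiv ℝ (fun w : E3 => Real.exp (-‖w‖ - B * ((w 0) ^ 2 + (w 1) ^ 2) / 4)) v
        (EuclideanSpace.single j 1)
      = Real.exp (-‖v‖ - B * ((v 0) ^ 2 + (v 1) ^ 2) / 4) *
        (-(v j) / ‖v‖ - (if j = 2 then 0 else B / 2) * v j) := by
  have hr : ‖v‖ ≠ 0 := norm_ne_zero_iff.2 hv
  rw [(hasFDerivAt_phi B hv).fderiv]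
  simp [EuclideanSpace.inner_single_right, EuclideanSpace.single_apply]
  fin_cases j <;> norm_num [Fin.ext_iff] <;> field_simp <;> ring

private lemma hasFDerivAt_inv_norm {v : E3} (hv : v ≠ 0) :
    HasFDerivAt (fun w : E3 => (‖w‖)⁻¹)
      ((-(‖v‖ ^ 2)⁻¹) • (‖v‖⁻¹ • innerSL ℝ v)) v := by
  have hr : ‖v‖ ≠ 0 := norm_ne_zero_iff.2 hv
  exact (hasDerivAt_inv hr).comp_hasFDerivAt v (hasFDerivAt_norm3 hv)

private lemma snd_deriv (B c : ℝ) (j : Fin 3) {v : E3} (hv : v ≠ 0) :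
    fderiv ℝ (fun w : E3 => Real.exp (-‖w‖ - B * ((w 0) ^ 2 + (w 1) ^ 2) / 4) *
        (-(w j) / ‖w‖ - c * w j)) v (EuclideanSpace.single j 1)
      = Real.exp (-‖v‖ - B * ((v 0) ^ 2 + (v 1) ^ 2) / 4) *
        ((-(v j) / ‖v‖ - (if j = 2 then 0 else B / 2) * v j) * (-(v j) / ‖v‖ - c * v j)
          + (-(‖v‖)⁻¹ + (v j) ^ 2 / ‖v‖ ^ 3 - c)) := by
  have hr : ‖v‖ ≠ 0 := norm_ne_zero_iff.2 hv
  have hφ := hasFDerivAt_phi B hv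
  have hnum : HasFDerivAt (fun w : E3 => -(w j))
      (-(EuclideanSpace.proj (𝕜 := ℝ) j : E3 →L[ℝ] ℝ)) v :=
    ((EuclideanSpace.proj (𝕜 := ℝ) j).hasFDerivAt (x := v)).neg
  have hfrac := hnum.mul (hasFDerivAt_inv_norm hv)
  have hlin := ((EuclideanSpace.proj (𝕜 := ℝ) j).hasFDerivAt (x := v)).const_mul c
  have hh := hfrac.sub hlin
  have hfun : (fun x : E3 => -(x j) * (‖x‖)⁻¹ - c * (EuclideanSpace.proj (𝕜 := ℝ) j) x)
      = fun w : E3 => -(w j) / ‖w‖ - c * w j := by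
    funext w; simp [div_eq_mul_inv]
  replace hh : HasFDerivAt (fun x : E3 => -(x j) * (‖x‖)⁻¹ - c * (EuclideanSpace.proj (𝕜 := ℝ) j) x) _ v := hh
  rw [hfun] at hh
  have hP := hφ.mul hh
  replace hP : HasFDerivAt (fun w : E3 => Real.exp (-‖w‖ - B * ((w 0) ^ 2 + (w 1) ^ 2) / 4) *
      (-(w j) / ‖w‖ - c * w j)) _ v := hP
  rw [hP.fderiv]
  simp [EuclideanSpace.inner_single_right, EuclideanSpace.single_apply, div_eq_mul_inv]
  fin_cases j <;> norm_num [Fin.ext_iff] <;> field_simp <;> ring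

private lemma contDiffAt_phi (B : ℝ) {v : E3} (hv : v ≠ 0) :
    ContDiffAt ℝ (⊤ : ℕ∞) (fun w : E3 => Real.exp (-‖w‖ - B * ((w 0) ^ 2 + (w 1) ^ 2) / 4)) v := by
  have h1 : ContDiffAt ℝ (⊤ : ℕ∞) (fun w : E3 => ‖w‖) v := contDiffAt_norm ℝ hv
  have hpoly : ContDiff ℝ (⊤ : ℕ∞) (fun w : E3 => B * ((w 0) ^ 2 + (w 1) ^ 2) / 4) := by
    have p0 : ContDiff ℝ (⊤ : ℕ∞) (fun w : E3 => (w 0 : ℝ)) :=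
      (EuclideanSpace.proj (𝕜 := ℝ) (0 : Fin 3)).contDiff
    have p1 : ContDiff ℝ (⊤ : ℕ∞) (fun w : E3 => (w 1 : ℝ)) :=
      (EuclideanSpace.proj (𝕜 := ℝ) (1 : Fin 3)).contDiff
    exact (contDiff_const.mul ((p0.pow 2).add (p1.pow 2))).div_const 4
  exact Real.contDiff_exp.contDiffAt.comp v (h1.neg.sub hpoly.contDiffAt)

private lemma iterated_eval (B c : ℝ) (j : Fin 3)
    (hc : (if j = 2 then (0 : ℝ) else B / 2) = c) {v : E3} (hv : v ≠ 0) :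
    iteratedFDeriv ℝ 2 (fun w : E3 => Real.exp (-‖w‖ - B * ((w 0) ^ 2 + (w 1) ^ 2) / 4)) v
      ![EuclideanSpace.single j 1, EuclideanSpace.single j 1]
    = Real.exp (-‖v‖ - B * ((v 0) ^ 2 + (v 1) ^ 2) / 4) *
        ((-(v j) / ‖v‖ - c * v j) ^ 2 + (-(‖v‖)⁻¹ + (v j) ^ 2 / ‖v‖ ^ 3 - c)) := by
  have hDiff : DifferentiableAt ℝ
      (fderiv ℝ (fun w : E3 => Real.exp (-‖w‖ - B * ((w 0) ^ 2 + (w 1) ^ 2) / 4))) v :=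
    (((contDiffAt_phi B hv).fderiv_right (m := (⊤ : ℕ∞)) (by simp)).differentiableAt (by simp))
  rw [iteratedFDeriv_two_apply]
  simp only [Matrix.cons_val_zero, Matrix.cons_val_one, Matrix.head_cons]
  have h1 : fderiv ℝ (fun w : E3 =>
        fderiv ℝ (fun w : E3 => Real.exp (-‖w‖ - B * ((w 0) ^ 2 + (w 1) ^ 2) / 4)) w
          (EuclideanSpace.single j 1)) v
      = (fderiv ℝ (fderiv ℝ (fun w : E3 => Real.exp (-‖w‖ - B * ((w 0) ^ 2 + (w 1) ^ 2) / 4)))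
          v).flip (EuclideanSpace.single j 1) := by
    rw [fderiv_clm_apply hDiff (differentiableAt_const _)]
    simp
  have hev : (fun w : E3 =>
        fderiv ℝ (fun w : E3 => Real.exp (-‖w‖ - B * ((w 0) ^ 2 + (w 1) ^ 2) / 4)) w
          (EuclideanSpace.single j 1))
      =ᶠ[nhds v] (fun w : E3 => Real.exp (-‖w‖ - B * ((w 0) ^ 2 + (w 1) ^ 2) / 4) *
          (-(w j) / ‖w‖ - c * w j)) := by
    filter_upwards [IsOpen.mem_nhds isOpen_compl_singleton hv] with w hw
    rw [fst_deriv B j hw, hc]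
  have h2 := hev.fderiv_eq (𝕜 := ℝ)
  have h3 : (fderiv ℝ (fderiv ℝ (fun w : E3 => Real.exp (-‖w‖ - B * ((w 0) ^ 2 + (w 1) ^ 2) / 4)))
        v) (EuclideanSpace.single j 1) (EuclideanSpace.single j 1)
      = fderiv ℝ (fun w : E3 => Real.exp (-‖w‖ - B * ((w 0) ^ 2 + (w 1) ^ 2) / 4) *
          (-(w j) / ‖w‖ - c * w j)) v (EuclideanSpace.single j 1) := by
    rw [← h2, h1]
    rfl
  rw [h3, snd_deriv B c j hv, hc]; ring

/-- For `B ≥ 0` and `φ(v) = exp(−‖v‖ − B(v₁² + v₂²)/4)` on `ℝ³`: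
`φ` is smooth away from the origin, rotation invariant around the third axis
(`−v₂ ∂₁φ + v₁ ∂₂φ = 0`), satisfies the local-energy identity for the Zeeman
Hamiltonian, and the local energy factor is bounded above by `−1/2 + B/2`. -/
theorem zeeman_testfunction_localEnergy (B : ℝ) (hB : 0 ≤ B)
    (φ : EuclideanSpace ℝ (Fin 3) → ℝ)
    (hφ : φ = fun v => Real.exp (-‖v‖ - B * ((v 0) ^ 2 + (v 1) ^ 2) / 4)) :
    ContDiffOn ℝ (⊤ : ℕ∞) φ {(0 : EuclideanSpace ℝ (Fin 3))}ᶜ ∧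
    (∀ v : EuclideanSpace ℝ (Fin 3), v ≠ 0 →
      -(v 1) * partialDeriv 0 φ v + (v 0) * partialDeriv 1 φ v = 0) ∧
    (∀ v : EuclideanSpace ℝ (Fin 3), v ≠ 0 →
      -(1 / 2) * laplacian φ v + B ^ 2 * ((v 0) ^ 2 + (v 1) ^ 2) / 8 * φ v
          - φ v / ‖v‖
        = (-(1 / 2) + B / 2 - B * ((v 0) ^ 2 + (v 1) ^ 2) / (2 * ‖v‖)) * φ v) ∧
    (∀ v : EuclideanSpace ℝ (Fin 3), v ≠ 0 →
      -(1 / 2) + B / 2 - B * ((v 0) ^ 2 + (v 1) ^ 2) / (2 * ‖v‖)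
        ≤ -(1 / 2) + B / 2) := by
  subst hφ
  refine ⟨?_, ?_, ?_, ?_⟩
  · intro v hv
    exact (contDiffAt_phi B (by simpa using hv)).contDiffWithinAt
  · intro v hv
    unfold partialDeriv
    rw [fst_deriv B 0 hv, fst_deriv B 1 hv]
    simp only [show (0 : Fin 3) ≠ 2 by decide, show (1 : Fin 3) ≠ 2 by decide, if_neg]
    ring
  · intro v hv
    have hr : ‖v‖ ≠ 0 := norm_ne_zero_iff.2 hv
    have hr2 : ‖v‖ ^ 2 = (v 0) ^ 2 + (v 1) ^ 2 + (v 2) ^ 2 := by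
      rw [EuclideanSpace.norm_eq, Real.sq_sqrt (by positivity)]
      simp [Fin.sum_univ_three, Real.norm_eq_abs, sq_abs]
    unfold laplacian
    rw [Fin.sum_univ_three,
      iterated_eval B (B / 2) 0 (by norm_num [Fin.ext_iff]) hv,
      iterated_eval B (B / 2) 1 (by norm_num [Fin.ext_iff]) hv,
      iterated_eval B 0 2 (by norm_num) hv]
    have h22 : (v 2) ^ 2 = ‖v‖ ^ 2 - (v 0) ^ 2 - (v 1) ^ 2 := by linarith
    rw [h22]
    field_simp
    linear_combination (32 * ‖v‖) * hr2
  · intro v hv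
    have h : 0 ≤ B * ((v 0) ^ 2 + (v 1) ^ 2) / (2 * ‖v‖) := by positivity
    linarith
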